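/- arXiv:1411.3389 — 5 statements merged into one kernel-verified Lean document; each statement's English description precedes it below -/
import Mathlib

section
/- Let T be a κ-strict pseudo-contraction on C and (xₙ) the Mann iteration with step sizes (λₙ) in (0,1). Then for all y ∈ C and n ≥ 0: ‖x_{n+1} - y‖² ≤ ‖xₙ - y‖² - (λₙ - κ)(1 - λₙ)‖xₙ - Txₙ‖² + 2‖y - Ty‖(‖xₙ - y‖ + 2‖y - Ty‖). -/
/-!
With `a = xₙ - y`, `w = xₙ - T xₙ` and `p = y - T y`, the step is `x_{n+1} - y = a - (1 - λₙ) w`.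
The pseudo-contraction inequality for the pair `(xₙ, y)` says `(1 - κ)‖q‖² ≤ 2⟪a, q⟫` for
`q = w - p`, i.e. `‖(1 - κ) q - a‖ ≤ ‖a‖`. Expanding `‖a - (1 - λₙ) w‖²` with `w = q + p`, the
only terms not controlled by this are those involving `p`, which Cauchy–Schwarz bounds by
`2‖a‖‖p‖ + (1 - κ)‖p‖²`.
-/

open scoped RealInnerProductSpace

section
variable {H : Type*} [NormedAddCommGroup H] [InnerProductSpace ℝ H]

theorem one_sub_mul_norm_sq_le_two_inner {a q : H} {κ : ℝ}
    (h : ‖a - q‖ ^ 2 ≤ ‖a‖ ^ 2 + κ * ‖q‖ ^ 2) :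
    (1 - κ) * ‖q‖ ^ 2 ≤ 2 * ⟪a, q⟫ := by
  rw [norm_sub_sq_real] at h
  linarith

theorem norm_smul_sub_le_norm {a q : H} {c : ℝ} (hc : 0 ≤ c)
    (h : c * ‖q‖ ^ 2 ≤ 2 * ⟪a, q⟫) : ‖c • q - a‖ ≤ ‖a‖ := by
  have hsq : ‖c • q - a‖ ^ 2 ≤ ‖a‖ ^ 2 := by
    rw [norm_sub_sq_real, norm_smul, Real.norm_of_nonneg hc, real_inner_smul_left,
      real_inner_comm]
    nlinarith
  exact (sq_le_sq₀ (norm_nonneg _) (norm_nonneg _)).mp hsq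

theorem mul_norm_add_sq_sub_two_inner_le {a q p : H} {c : ℝ} (hc : 0 ≤ c)
    (h : c * ‖q‖ ^ 2 ≤ 2 * ⟪a, q⟫) :
    c * ‖q + p‖ ^ 2 - 2 * ⟪a, q + p⟫ ≤ 2 * ‖a‖ * ‖p‖ + c * ‖p‖ ^ 2 := by
  have hcs : ⟪c • q - a, p⟫ ≤ ‖a‖ * ‖p‖ :=
    (real_inner_le_norm _ _).trans
      (mul_le_mul_of_nonneg_right (norm_smul_sub_le_norm hc h) (norm_nonneg p))
  rw [inner_sub_left, real_inner_smul_left] at hcs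
  rw [norm_add_sq_real, inner_add_right]
  nlinarith

theorem norm_sub_smul_sq_le {a w p : H} {κ l : ℝ} (hκ0 : 0 ≤ κ) (hκ1 : κ ≤ 1)
    (hl : l ∈ Set.Icc (0 : ℝ) 1) (h : (1 - κ) * ‖w - p‖ ^ 2 ≤ 2 * ⟪a, w - p⟫) :
    ‖a - (1 - l) • w‖ ^ 2
      ≤ ‖a‖ ^ 2 - (l - κ) * (1 - l) * ‖w‖ ^ 2 + 2 * ‖p‖ * (‖a‖ + 2 * ‖p‖) := by
  obtain ⟨hl0, hl1⟩ := hl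
  have hw := mul_norm_add_sq_sub_two_inner_le (p := p) (sub_nonneg.mpr hκ1) h
  rw [sub_add_cancel] at hw
  have hB : 0 ≤ 2 * ‖a‖ * ‖p‖ + (1 - κ) * ‖p‖ ^ 2 := by
    have := sub_nonneg.mpr hκ1
    positivity
  rw [norm_sub_sq_real, norm_smul, Real.norm_of_nonneg (sub_nonneg.mpr hl1),
    real_inner_smul_right]
  nlinarith [mul_le_mul_of_nonneg_left hw (sub_nonneg.mpr hl1), mul_nonneg hl0 hB,
    norm_nonneg a, norm_nonneg p]

theorem mann_iterate_mem {C : Set H} (hC : Convex ℝ C) {T : H → H} (hT : Set.MapsTo T C C)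
    {lam : ℕ → ℝ} (hlam : ∀ n, lam n ∈ Set.Icc (0 : ℝ) 1) {x : ℕ → H} (hx0 : x 0 ∈ C)
    (hx : ∀ n, x (n + 1) = lam n • x n + (1 - lam n) • T (x n)) (n : ℕ) : x n ∈ C := by
  induction n with
  | zero => exact hx0
  | succ k ih =>
    rw [hx k]
    exact hC ih (hT ih) (hlam k).1 (sub_nonneg.mpr (hlam k).2) (add_sub_cancel _ _)

end

theorem stmt_2_general {H : Type*} [NormedAddCommGroup H] [InnerProductSpace ℝ H]
    (C : Set H) (hCconv : Convex ℝ C)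
    (κ : ℝ) (hκ0 : 0 ≤ κ) (hκ1 : κ < 1)
    (T : H → H) (hTmap : Set.MapsTo T C C)
    (hT : ∀ u ∈ C, ∀ v ∈ C,
      ‖T u - T v‖ ^ 2 ≤ ‖u - v‖ ^ 2 + κ * ‖(u - T u) - (v - T v)‖ ^ 2)
    (lam : ℕ → ℝ) (hlam : ∀ n, lam n ∈ Set.Ioo (0:ℝ) 1)
    (x : ℕ → H) (hx0 : x 0 ∈ C)
    (hxrec : ∀ n, x (n + 1) = lam n • x n + (1 - lam n) • T (x n)) :
    ∀ y ∈ C, ∀ n : ℕ,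
      ‖x (n + 1) - y‖ ^ 2
        ≤ ‖x n - y‖ ^ 2 - (lam n - κ) * (1 - lam n) * ‖x n - T (x n)‖ ^ 2
          + 2 * ‖y - T y‖ * (‖x n - y‖ + 2 * ‖y - T y‖) := by
  intro y hy n
  have hlam' n : lam n ∈ Set.Icc (0 : ℝ) 1 := Set.Ioo_subset_Icc_self (hlam n)
  have hxn : x n ∈ C := mann_iterate_mem hCconv hTmap hlam' hx0 hxrec n
  have hstep : x (n + 1) - y = (x n - y) - (1 - lam n) • (x n - T (x n)) := by
    rw [hxrec n]
    module
  have hpseudo := hT (x n) hxn y hy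
  rw [show T (x n) - T y = (x n - y) - ((x n - T (x n)) - (y - T y)) by abel] at hpseudo
  rw [hstep]
  exact norm_sub_smul_sq_le hκ0 hκ1.le (hlam' n) (one_sub_mul_norm_sq_le_two_inner hpseudo)

theorem stmt_2 {H : Type*} [NormedAddCommGroup H] [InnerProductSpace ℝ H]
    (C : Set H) (hCne : C.Nonempty) (hCconv : Convex ℝ C)
    (κ : ℝ) (hκ0 : 0 ≤ κ) (hκ1 : κ < 1)
    (T : H → H) (hTmap : Set.MapsTo T C C)
    (hT : ∀ u ∈ C, ∀ v ∈ C,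
      ‖T u - T v‖ ^ 2 ≤ ‖u - v‖ ^ 2 + κ * ‖(u - T u) - (v - T v)‖ ^ 2)
    (lam : ℕ → ℝ) (hlam : ∀ n, lam n ∈ Set.Ioo (0:ℝ) 1)
    (x : ℕ → H) (hx0 : x 0 ∈ C)
    (hxrec : ∀ n, x (n + 1) = lam n • x n + (1 - lam n) • T (x n)) :
    ∀ y ∈ C, ∀ n : ℕ,
      ‖x (n + 1) - y‖ ^ 2
        ≤ ‖x n - y‖ ^ 2 - (lam n - κ) * (1 - lam n) * ‖x n - T (x n)‖ ^ 2
          + 2 * ‖y - T y‖ * (‖x n - y‖ + 2 * ‖y - T y‖) :=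
  stmt_2_general C hCconv κ hκ0 hκ1 T hTmap hT lam hlam x hx0 hxrec
end

section
/- For the Mann iteration (xₙ) of a κ-strict pseudo-contraction T with λₙ ∈ (κ,1) ⊆ (0,1), the sequence (‖xₙ - Txₙ‖) is nonincreasing. -/
/-!
For `κ ≤ λ ≤ 1` the relaxed map `S_λ = λ I + (1 - λ) T` of a `κ`-strict pseudo-contraction is
nonexpansive on `C`: expanding the convex combination gives
`‖S_λ u - S_λ v‖² ≤ ‖u - v‖² - (1 - λ)(λ - κ) ‖(u - T u) - (v - T v)‖²`.
One Mann step is `x_{n+1} = S_{λₙ} xₙ`, and both `x_{n+1} - S_{λₙ} x_{n+1}` and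
`xₙ - x_{n+1} = xₙ - S_{λₙ} xₙ` are `(1 - λₙ)` times the residuals `x - T x` at `x_{n+1}` and `xₙ`,
so nonexpansiveness of `S_{λₙ}` compares the two residuals.
-/

section

variable {H : Type*} [NormedAddCommGroup H] [InnerProductSpace ℝ H]

def IsStrictPseudoContractionOn (κ : ℝ) (T : H → H) (C : Set H) : Prop :=
  ∀ u ∈ C, ∀ v ∈ C, ‖T u - T v‖ ^ 2 ≤ ‖u - v‖ ^ 2 + κ * ‖(u - T u) - (v - T v)‖ ^ 2

theorem norm_smul_add_one_sub_smul_sq (t : ℝ) (u v : H) :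
    ‖t • u + (1 - t) • v‖ ^ 2 = t * ‖u‖ ^ 2 + (1 - t) * ‖v‖ ^ 2 - t * (1 - t) * ‖u - v‖ ^ 2 := by
  simp only [← real_inner_self_eq_norm_sq, inner_add_left, inner_add_right, inner_sub_left,
    inner_sub_right, real_inner_smul_left, real_inner_smul_right, real_inner_comm u v]
  ring

namespace IsStrictPseudoContractionOn

variable {κ : ℝ} {T : H → H} {C : Set H}

theorem norm_relax_sub_relax_le (hT : IsStrictPseudoContractionOn κ T C) {t : ℝ}
    (hκt : κ ≤ t) (ht1 : t ≤ 1) {u v : H} (hu : u ∈ C) (hv : v ∈ C) :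
    ‖(t • u + (1 - t) • T u) - (t • v + (1 - t) • T v)‖ ≤ ‖u - v‖ := by
  have hsplit : (t • u + (1 - t) • T u) - (t • v + (1 - t) • T v)
      = t • (u - v) + (1 - t) • (T u - T v) := by module
  have hresid : (u - T u) - (v - T v) = (u - v) - (T u - T v) := by abel
  have hTuv := hT u hu v hv
  rw [hresid] at hTuv
  refine pow_le_pow_iff_left₀ (norm_nonneg _) (norm_nonneg _) two_ne_zero |>.mp ?_
  rw [hsplit, norm_smul_add_one_sub_smul_sq]
  nlinarith [mul_le_mul_of_nonneg_left hTuv (sub_nonneg.2 ht1),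
    mul_nonneg (mul_nonneg (sub_nonneg.2 ht1) (sub_nonneg.2 hκt))
      (sq_nonneg ‖(u - v) - (T u - T v)‖)]

end IsStrictPseudoContractionOn

end

theorem stmt_4_general {H : Type*} [NormedAddCommGroup H] [InnerProductSpace ℝ H]
    (C : Set H) (hCconv : Convex ℝ C)
    (κ : ℝ) (hκ0 : 0 ≤ κ)
    (T : H → H) (hTmap : Set.MapsTo T C C)
    (hT : ∀ u ∈ C, ∀ v ∈ C,
      ‖T u - T v‖ ^ 2 ≤ ‖u - v‖ ^ 2 + κ * ‖(u - T u) - (v - T v)‖ ^ 2)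
    (lam : ℕ → ℝ) (hlam : ∀ n, lam n ∈ Set.Ioo κ 1)
    (x : ℕ → H) (hx0 : x 0 ∈ C)
    (hxrec : ∀ n, x (n + 1) = lam n • x n + (1 - lam n) • T (x n)) :
    Antitone (fun n : ℕ => ‖x n - T (x n)‖) := by
  have hmem : ∀ n, x n ∈ C := by
    intro n
    induction n with
    | zero => exact hx0
    | succ n ih =>
      obtain ⟨hκl, hl1⟩ := hlam n
      rw [hxrec]
      exact hCconv ih (hTmap ih) (by linarith) (by linarith) (by ring)
  refine antitone_nat_of_succ_le fun n => ?_
  obtain ⟨hκl, hl1⟩ := hlam n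
  have hstep := IsStrictPseudoContractionOn.norm_relax_sub_relax_le hT hκl.le hl1.le
    (hmem n) (hmem (n + 1))
  have hnext : x (n + 1) - (lam n • x (n + 1) + (1 - lam n) • T (x (n + 1)))
      = (1 - lam n) • (x (n + 1) - T (x (n + 1))) := by module
  have hprev : x n - x (n + 1) = (1 - lam n) • (x n - T (x n)) := by rw [hxrec]; module
  rw [← hxrec, hnext, hprev, norm_smul, norm_smul] at hstep
  exact le_of_mul_le_mul_left hstep (norm_pos_iff.2 (sub_ne_zero.2 hl1.ne'))

theorem stmt_4 {H : Type*} [NormedAddCommGroup H] [InnerProductSpace ℝ H]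
    (C : Set H) (hCne : C.Nonempty) (hCconv : Convex ℝ C)
    (κ : ℝ) (hκ0 : 0 ≤ κ) (hκ1 : κ < 1)
    (T : H → H) (hTmap : Set.MapsTo T C C)
    (hT : ∀ u ∈ C, ∀ v ∈ C,
      ‖T u - T v‖ ^ 2 ≤ ‖u - v‖ ^ 2 + κ * ‖(u - T u) - (v - T v)‖ ^ 2)
    (lam : ℕ → ℝ) (hlam : ∀ n, lam n ∈ Set.Ioo κ 1)
    (x : ℕ → H) (hx0 : x 0 ∈ C)
    (hxrec : ∀ n, x (n + 1) = lam n • x n + (1 - lam n) • T (x n)) :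
    Antitone (fun n : ℕ => ‖x n - T (x n)‖) :=
  stmt_4_general C hCconv κ hκ0 T hTmap hT lam hlam x hx0 hxrec
end

section
/- Let (xₙ) be the Mann iteration of a κ-strict pseudo-contraction T starting at x with λₙ ∈ (κ,1). If y ∈ C, b ≥ max{‖x - Tx‖, ‖x - y‖}, and c ≥ ‖y - Ty‖, then for all n ≥ 0: ‖x_{n+1} - y‖² ≤ ‖xₙ - y‖² - (λₙ - κ)(1 - λₙ)‖xₙ - Txₙ‖² + 2((n+1)b + 2c)‖y - Ty‖. -/
open RealInnerProductSpace

section Aux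
variable {H : Type*} [NormedAddCommGroup H] [InnerProductSpace ℝ H]

lemma aux_convex_sq (t : ℝ) (a b : H) :
    ‖t•a + (1-t)•b‖^2 = t*‖a‖^2 + (1-t)*‖b‖^2 - t*(1-t)*‖a-b‖^2 := by
  simp only [← real_inner_self_eq_norm_sq, inner_add_add_self, inner_sub_sub_self,
    real_inner_smul_left, real_inner_smul_right]
  ring

lemma aux_smul_sub_sq (t : ℝ) (w v : H) :
    ‖t•w - v‖^2 = t^2*‖w‖^2 - 2*t*⟪w,v⟫ + ‖v‖^2 := by
  rw [norm_sub_sq_real, real_inner_smul_left, norm_smul]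
  simp [mul_pow, sq_abs]; ring

end Aux

set_option maxHeartbeats 1000000 in
theorem stmt_6 {H : Type*} [NormedAddCommGroup H] [InnerProductSpace ℝ H]
    (C : Set H) (hCne : C.Nonempty) (hCconv : Convex ℝ C)
    (κ : ℝ) (hκ0 : 0 ≤ κ) (hκ1 : κ < 1)
    (T : H → H) (hTmap : Set.MapsTo T C C)
    (hT : ∀ u ∈ C, ∀ v ∈ C,
      ‖T u - T v‖ ^ 2 ≤ ‖u - v‖ ^ 2 + κ * ‖(u - T u) - (v - T v)‖ ^ 2)
    (lam : ℕ → ℝ) (hlam : ∀ n, lam n ∈ Set.Ioo κ 1)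
    (x : ℕ → H) (hx0 : x 0 ∈ C)
    (hxrec : ∀ n, x (n + 1) = lam n • x n + (1 - lam n) • T (x n))
    (y : H) (hy : y ∈ C) (b c : ℝ)
    (hb1 : ‖x 0 - T (x 0)‖ ≤ b) (hb2 : ‖x 0 - y‖ ≤ b) (hc : ‖y - T y‖ ≤ c) :
    ∀ n : ℕ,
      ‖x (n + 1) - y‖ ^ 2
        ≤ ‖x n - y‖ ^ 2 - (lam n - κ) * (1 - lam n) * ‖x n - T (x n)‖ ^ 2
          + 2 * ((n + 1 : ℝ) * b + 2 * c) * ‖y - T y‖ := by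
  have hb0 : 0 ≤ b := le_trans (norm_nonneg _) hb1
  have hd0 : 0 ≤ ‖y - T y‖ := norm_nonneg _
  have hc0 : 0 ≤ c := le_trans hd0 hc
  -- membership
  have hmem : ∀ n, x n ∈ C := by
    intro n
    induction n with
    | zero => exact hx0
    | succ k ih =>
      rw [hxrec]
      exact hCconv ih (hTmap ih) (le_trans hκ0 (hlam k).1.le)
        (by linarith [(hlam k).2]) (by ring)
  -- the residual is non-increasing
  have hAdec : ∀ n, ‖x (n+1) - T (x (n+1))‖ ≤ ‖x n - T (x n)‖ := by
    intro n
    have hlκ : κ < lam n := (hlam n).1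
    have hl1 : lam n < 1 := (hlam n).2
    set w := x n - T (x n) with hw
    set v := x (n+1) - T (x (n+1)) with hv
    have h1 : x (n+1) - x n = (lam n - 1) • w := by
      rw [hxrec n, hw]; module
    have h2 : T (x (n+1)) - T (x n) = lam n • w - v := by
      have hTv : T (x (n+1)) = x (n+1) - v := by rw [hv]; abel
      rw [hTv, hxrec n, hw]; module
    have hct := hT (x (n+1)) (hmem (n+1)) (x n) (hmem n)
    rw [h1, h2] at hct
    have e1 : ‖lam n • w - v‖^2 = (lam n)^2*‖w‖^2 - 2*(lam n)*⟪w,v⟫ + ‖v‖^2 :=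
      aux_smul_sub_sq (lam n) w v
    have e2 : ‖v - w‖^2 = ‖w‖^2 - 2*⟪w,v⟫ + ‖v‖^2 := by
      rw [norm_sub_sq_real, real_inner_comm]; ring
    have e3 : ‖(lam n - 1) • w‖^2 = (lam n - 1)^2 * ‖w‖^2 := by
      rw [norm_smul]; simp [mul_pow, sq_abs]
    have e4 : (x (n+1) - T (x (n+1))) - (x n - T (x n)) = v - w := by rw [hv, hw]
    rw [e4, e1, e2, e3] at hct
    have hi : ⟪w,v⟫ ≤ ‖w‖ * ‖v‖ := real_inner_le_norm w v
    have hWn : 0 ≤ ‖w‖ := norm_nonneg _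
    have hVn : 0 ≤ ‖v‖ := norm_nonneg _
    by_contra hcon
    push_neg at hcon
    nlinarith [mul_pos (sub_pos.2 hcon)
      (by nlinarith : (0:ℝ) < (1-κ)*‖v‖ + (1-2*(lam n)+κ)*‖w‖)]
  have hAb : ∀ n, ‖x n - T (x n)‖ ≤ b := by
    intro n
    induction n with
    | zero => exact hb1
    | succ k ih => exact le_trans (hAdec k) ih
  -- distance growth
  have heb : ∀ n, ‖x n - y‖ ≤ ((n:ℝ)+1)*b := by
    intro n
    induction n with
    | zero => simpa using hb2
    | succ k ih =>
      have h1 : x (k+1) - y = (x k - y) + (lam k - 1) • (x k - T (x k)) := by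
        rw [hxrec k]; module
      have h2 : ‖x (k+1) - y‖ ≤ ‖x k - y‖ + ‖(lam k - 1) • (x k - T (x k))‖ := by
        rw [h1]; exact norm_add_le _ _
      have h3 : ‖(lam k - 1) • (x k - T (x k))‖ = (1 - lam k) * ‖x k - T (x k)‖ := by
        rw [norm_smul, Real.norm_eq_abs, abs_of_nonpos (by linarith [(hlam k).2])]
        ring
      have h4 : (1 - lam k) * ‖x k - T (x k)‖ ≤ b := by
        nlinarith [(hlam k).1, (hlam k).2, norm_nonneg (x k - T (x k)), hAb k]
      rw [h3] at h2
      push_cast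
      linarith
  -- main estimate
  intro n
  have hlκ : κ < lam n := (hlam n).1
  have hl1 : lam n < 1 := (hlam n).2
  -- decomposition through z = lam n • y + (1 - lam n) • T y
  have h1 : x (n+1) - (lam n • y + (1 - lam n) • T y)
      = lam n • (x n - y) + (1 - lam n) • (T (x n) - T y) := by
    rw [hxrec n]; module
  have h2 : ‖x (n+1) - (lam n • y + (1 - lam n) • T y)‖^2
      = lam n * ‖x n - y‖^2 + (1 - lam n) * ‖T (x n) - T y‖^2
        - lam n * (1 - lam n) * ‖(x n - T (x n)) - (y - T y)‖^2 := by
    rw [h1, aux_convex_sq]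
    have h4 : (x n - y) - (T (x n) - T y) = (x n - T (x n)) - (y - T y) := by module
    rw [h4]
  have h3 := hT (x n) (hmem n) y hy
  have hR0 : 0 ≤ ‖(x n - T (x n)) - (y - T y)‖^2 := sq_nonneg _
  have hSsq : ‖x (n+1) - (lam n • y + (1 - lam n) • T y)‖^2
      ≤ ‖x n - y‖^2 - (lam n - κ)*(1 - lam n)*‖(x n - T (x n)) - (y - T y)‖^2 := by
    have h5 := mul_le_mul_of_nonneg_left h3 (by linarith : (0:ℝ) ≤ 1 - lam n)
    rw [h2]; nlinarith [h5]
  -- lower bound on the residual difference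
  have hRlow : ‖x n - T (x n)‖^2 - 2*‖x n - T (x n)‖*‖y - T y‖
      ≤ ‖(x n - T (x n)) - (y - T y)‖^2 := by
    have hE : ‖(x n - T (x n)) - (y - T y)‖^2
        = ‖x n - T (x n)‖^2 - 2*⟪x n - T (x n), y - T y⟫ + ‖y - T y‖^2 :=
      norm_sub_sq_real _ _
    have hi : ⟪x n - T (x n), y - T y⟫ ≤ ‖x n - T (x n)‖ * ‖y - T y‖ :=
      real_inner_le_norm _ _
    nlinarith [sq_nonneg ‖y - T y‖]
  have hμR : (lam n - κ)*(1 - lam n)*(‖x n - T (x n)‖^2 - 2*‖x n - T (x n)‖*‖y - T y‖)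
      ≤ (lam n - κ)*(1 - lam n)*‖(x n - T (x n)) - (y - T y)‖^2 :=
    mul_le_mul_of_nonneg_left hRlow (mul_nonneg (by linarith) (by linarith))
  -- norm bound
  have hSle : ‖x (n+1) - (lam n • y + (1 - lam n) • T y)‖ ≤ ‖x n - y‖ := by
    nlinarith [hSsq, norm_nonneg (x (n+1) - (lam n • y + (1 - lam n) • T y)),
      norm_nonneg (x n - y),
      mul_nonneg (mul_nonneg (by linarith : (0:ℝ) ≤ lam n - κ)
        (by linarith : (0:ℝ) ≤ 1 - lam n)) hR0]
  -- expansion of the full norm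
  have hzy : (lam n • y + (1 - lam n) • T y) - y = (1 - lam n) • (T y - y) := by module
  have hsum : x (n+1) - y = (x (n+1) - (lam n • y + (1 - lam n) • T y))
      + ((lam n • y + (1 - lam n) • T y) - y) := by abel
  have hns : ‖(1 - lam n) • (T y - y)‖^2 = (1 - lam n)^2 * ‖y - T y‖^2 := by
    rw [norm_smul]
    simp [Real.norm_eq_abs, mul_pow, sq_abs, norm_sub_rev (T y) y]
  have hexp : ‖x (n+1) - y‖^2
      = ‖x (n+1) - (lam n • y + (1 - lam n) • T y)‖^2
        + 2*⟪x (n+1) - (lam n • y + (1 - lam n) • T y),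
            (lam n • y + (1 - lam n) • T y) - y⟫
        + (1 - lam n)^2*‖y - T y‖^2 := by
    rw [hsum, norm_add_sq_real]
    congr 1
    rw [hzy, hns]
  have hcross : ⟪x (n+1) - (lam n • y + (1 - lam n) • T y),
      (lam n • y + (1 - lam n) • T y) - y⟫
      ≤ (1 - lam n)*‖x n - y‖*‖y - T y‖ := by
    rw [hzy, real_inner_smul_right]
    have hi : ⟪x (n+1) - (lam n • y + (1 - lam n) • T y), T y - y⟫
        ≤ ‖x (n+1) - (lam n • y + (1 - lam n) • T y)‖ * ‖T y - y‖ :=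
      real_inner_le_norm _ _
    rw [norm_sub_rev (T y) y] at hi
    have h6 := mul_le_mul_of_nonneg_right (le_trans hi
      (mul_le_mul_of_nonneg_right hSle hd0)) (by linarith : (0:ℝ) ≤ 1 - lam n)
    nlinarith
  -- scalar error estimate
  have hA0 : (0:ℝ) ≤ ‖x n - T (x n)‖ := norm_nonneg _
  have he0 : (0:ℝ) ≤ ‖x n - y‖ := norm_nonneg _
  have hn0 : (0:ℝ) ≤ (n:ℝ) := Nat.cast_nonneg n
  have key : (lam n - κ)*(1 - lam n) + (1 - lam n)*((n:ℝ)+1) ≤ ((n:ℝ)+1) := by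
    nlinarith
  have t1 : 2*((lam n - κ)*(1 - lam n))*‖x n - T (x n)‖*‖y - T y‖
      ≤ 2*((lam n - κ)*(1 - lam n))*b*‖y - T y‖ := by
    have h5 := mul_le_mul_of_nonneg_right (hAb n) hd0
    have h6 := mul_le_mul_of_nonneg_left h5
      (by nlinarith : (0:ℝ) ≤ 2*((lam n - κ)*(1 - lam n)))
    linarith [h6]
  have t2 : 2*(1 - lam n)*‖x n - y‖*‖y - T y‖
      ≤ 2*(1 - lam n)*(((n:ℝ)+1)*b)*‖y - T y‖ := by
    have h5 := mul_le_mul_of_nonneg_right (heb n) hd0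
    have h6 := mul_le_mul_of_nonneg_left h5 (by linarith : (0:ℝ) ≤ 2*(1 - lam n))
    linarith [h6]
  have t3 : (1 - lam n)^2*‖y - T y‖^2 ≤ c*‖y - T y‖ := by
    have h1l : (1 - lam n)^2 ≤ 1 := by nlinarith
    have h2l := mul_le_mul_of_nonneg_right h1l (sq_nonneg ‖y - T y‖)
    have h3l := mul_le_mul_of_nonneg_right hc hd0
    nlinarith
  have t4 : 2*((lam n - κ)*(1 - lam n))*b*‖y - T y‖
      + 2*(1 - lam n)*(((n:ℝ)+1)*b)*‖y - T y‖ ≤ 2*(((n:ℝ)+1)*b)*‖y - T y‖ := by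
    have h5 := mul_le_mul_of_nonneg_right key (mul_nonneg (mul_nonneg
      (by norm_num : (0:ℝ) ≤ 2) hb0) hd0)
    linarith [h5]
  have herr : 2*((lam n - κ)*(1 - lam n))*‖x n - T (x n)‖*‖y - T y‖
      + 2*(1 - lam n)*‖x n - y‖*‖y - T y‖ + (1 - lam n)^2*‖y - T y‖^2
      ≤ 2*(((n:ℝ)+1)*b + 2*c)*‖y - T y‖ := by
    have hcd : c*‖y - T y‖ ≤ 2*(2*c)*‖y - T y‖ := by
      have := mul_nonneg hc0 hd0
      linarith
    linarith [t1, t2, t3, t4, hcd]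
  clear h1 h2 h3 hsum hzy hns hRlow hR0 hSle
  set d := ‖y - T y‖ with hdd
  set e := ‖x n - y‖ with hee
  set A := ‖x n - T (x n)‖ with hAA
  set R := ‖x n - T (x n) - (y - T y)‖ ^ 2 with hRR
  set S := ‖x (n+1) - (lam n • y + (1 - lam n) • T y)‖ with hSS
  set I := ⟪x (n+1) - (lam n • y + (1 - lam n) • T y),
      (lam n • y + (1 - lam n) • T y) - y⟫ with hII
  push_cast
  linarith [hexp, hcross, hSsq, hμR, herr]
end

section
/- (Claim in main proof) Let T be a κ-strict pseudo-contraction, x ∈ C, b > 0 with ‖x - Tx‖ ≤ b, and suppose T has approximate fixed points in a b-neighborhood of x (for every δ > 0 there exists y ∈ C with ‖x - y‖ ≤ b and ‖y - Ty‖ < δ). Let (xₙ) be the Mann iteration with λₙ ∈ (κ,1). Then for every N ∈ ℕ, ∑_{n=0}^{N} (λₙ - κ)(1 - λₙ)‖xₙ - Txₙ‖² ≤ b². -/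
open scoped RealInnerProductSpace

lemma combo_norm_sq {H : Type*} [NormedAddCommGroup H] [InnerProductSpace ℝ H]
    (t : ℝ) (a b : H) :
    ‖t • a + (1 - t) • b‖ ^ 2
      = t * ‖a‖ ^ 2 + (1 - t) * ‖b‖ ^ 2 - t * (1 - t) * ‖a - b‖ ^ 2 := by
  rw [← real_inner_self_eq_norm_sq, ← real_inner_self_eq_norm_sq,
    ← real_inner_self_eq_norm_sq, ← real_inner_self_eq_norm_sq]
  simp only [inner_add_left, inner_add_right, inner_sub_left, inner_sub_right,
    real_inner_smul_left, real_inner_smul_right, real_inner_comm a b]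
  ring

set_option maxHeartbeats 1000000 in
theorem stmt_7 {H : Type*} [NormedAddCommGroup H] [InnerProductSpace ℝ H]
    (C : Set H) (hCne : C.Nonempty) (hCconv : Convex ℝ C)
    (κ : ℝ) (hκ0 : 0 ≤ κ) (hκ1 : κ < 1)
    (T : H → H) (hTmap : Set.MapsTo T C C)
    (hT : ∀ u ∈ C, ∀ v ∈ C,
      ‖T u - T v‖ ^ 2 ≤ ‖u - v‖ ^ 2 + κ * ‖(u - T u) - (v - T v)‖ ^ 2)
    (lam : ℕ → ℝ) (hlam : ∀ n, lam n ∈ Set.Ioo κ 1)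
    (x : ℕ → H) (hx0 : x 0 ∈ C)
    (hxrec : ∀ n, x (n + 1) = lam n • x n + (1 - lam n) • T (x n))
    (b : ℝ) (hb : 0 < b) (hxb : ‖x 0 - T (x 0)‖ ≤ b)
    (hafp : ∀ δ > (0:ℝ), ∃ y ∈ C, ‖x 0 - y‖ ≤ b ∧ ‖y - T y‖ < δ) :
    ∀ N : ℕ,
      ∑ n ∈ Finset.range (N + 1),
        (lam n - κ) * (1 - lam n) * ‖x n - T (x n)‖ ^ 2 ≤ b ^ 2 := by
  have hmem : ∀ n, x n ∈ C := by
    intro n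
    induction n with
    | zero => exact hx0
    | succ n ih =>
      rw [hxrec]
      exact hCconv ih (hTmap ih) (le_of_lt (lt_of_le_of_lt hκ0 (hlam n).1))
        (by linarith [(hlam n).2]) (by ring)
  intro N
  -- a uniform bound, independent of the approximate fixed point
  set M : ℝ := (∑ n ∈ Finset.range (N + 1), (‖x n - x 0‖ + ‖x n - T (x n)‖)) + b + 1
    with hMdef
  have hMsum : ∀ n ≤ N, ‖x n - x 0‖ + ‖x n - T (x n)‖
      ≤ ∑ k ∈ Finset.range (N + 1), (‖x k - x 0‖ + ‖x k - T (x k)‖) := by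
    intro n hn
    exact Finset.single_le_sum (f := fun k => ‖x k - x 0‖ + ‖x k - T (x k)‖)
      (fun k _ => by positivity) (Finset.mem_range.2 (Nat.lt_succ_of_le hn))
  have hMd : ∀ n ≤ N, ‖x n - T (x n)‖ ≤ M := by
    intro n hn
    have := hMsum n hn
    have h0 : (0:ℝ) ≤ ‖x n - x 0‖ := norm_nonneg _
    rw [hMdef]; linarith
  set K : ℝ := 4 * M + 2 with hKdef
  have hM0 : 0 < M := by
    have : (0:ℝ) ≤ ∑ n ∈ Finset.range (N + 1), (‖x n - x 0‖ + ‖x n - T (x n)‖) :=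
      Finset.sum_nonneg fun k _ => by positivity
    rw [hMdef]; linarith
  have hK0 : 0 < K := by rw [hKdef]; linarith
  -- the key estimate for an approximate fixed point
  have key : ∀ y ∈ C, ‖x 0 - y‖ ≤ b → ‖y - T y‖ ≤ 1 →
      ∑ n ∈ Finset.range (N + 1),
        (lam n - κ) * (1 - lam n) * ‖x n - T (x n)‖ ^ 2
      ≤ b ^ 2 + (2 * b + 1 + (N + 1 : ℝ) * K) * ‖y - T y‖ := by
    intro y hy hyb hy1
    set e : ℝ := ‖y - T y‖ with hedef
    have he0 : 0 ≤ e := norm_nonneg _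
    set p : H := T y with hpdef
    have hMa : ∀ n ≤ N, ‖x n - p‖ ≤ M := by
      intro n hn
      have h1 : ‖x n - p‖ ≤ ‖x n - x 0‖ + ‖x 0 - y‖ + ‖y - p‖ := by
        have h : x n - p = (x n - x 0) + (x 0 - y) + (y - p) := by abel
        rw [h]
        exact le_trans (norm_add_le _ _) (by gcongr; exact norm_add_le _ _)
      have := hMsum n hn
      have h0 : (0:ℝ) ≤ ‖x n - T (x n)‖ := norm_nonneg _
      rw [hMdef]; rw [hpdef] at h1; rw [hpdef] at hedef; linarith
    have step : ∀ n ≤ N, ‖x (n + 1) - p‖ ^ 2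
        ≤ ‖x n - p‖ ^ 2 - (lam n - κ) * (1 - lam n) * ‖x n - T (x n)‖ ^ 2 + K * e := by
      intro n hn
      obtain ⟨hl1, hl2⟩ := hlam n
      have hl0 : 0 < lam n := lt_of_le_of_lt hκ0 hl1
      have hid : ‖x (n + 1) - p‖ ^ 2
          = lam n * ‖x n - p‖ ^ 2 + (1 - lam n) * ‖T (x n) - p‖ ^ 2
            - lam n * (1 - lam n) * ‖(x n - p) - (T (x n) - p)‖ ^ 2 := by
        have hx' : x (n + 1) - p = lam n • (x n - p) + (1 - lam n) • (T (x n) - p) := by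
          rw [hxrec]; module
        rw [hx', combo_norm_sq]
      have hd : (x n - p) - (T (x n) - p) = x n - T (x n) := by abel
      rw [hd] at hid
      -- pseudo-contraction estimate
      have hpc := hT (x n) (hmem n) y hy
      have h1 : ‖x n - y‖ ≤ ‖x n - p‖ + e := by
        have h : x n - y = (x n - p) + (p - y) := by abel
        rw [h]
        refine le_trans (norm_add_le _ _) ?_
        have h' : ‖p - y‖ = e := by rw [hedef, hpdef, norm_sub_rev]
        linarith
      have h2 : ‖(x n - T (x n)) - (y - T y)‖ ≤ ‖x n - T (x n)‖ + e := by
        have h : (x n - T (x n)) - (y - T y) = (x n - T (x n)) + -(y - T y) := by abel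
        rw [h]
        refine le_trans (norm_add_le _ _) ?_
        rw [norm_neg]
      have h1' : ‖x n - y‖ ^ 2 ≤ (‖x n - p‖ + e) ^ 2 :=
        pow_le_pow_left₀ (norm_nonneg _) h1 2
      have h2' : ‖(x n - T (x n)) - (y - T y)‖ ^ 2 ≤ (‖x n - T (x n)‖ + e) ^ 2 :=
        pow_le_pow_left₀ (norm_nonneg _) h2 2
      have hMa' := hMa n hn
      have hMd' := hMd n hn
      have ha0 : 0 ≤ ‖x n - p‖ := norm_nonneg _
      have hd0 : 0 ≤ ‖x n - T (x n)‖ := norm_nonneg _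
      have hκ1' : κ ≤ 1 := le_of_lt hκ1
      -- bound the error terms
      have herr : 2 * e * ‖x n - p‖ + κ * (2 * e * ‖x n - T (x n)‖)
          + (1 + κ) * e ^ 2 ≤ K * e := by
        have e1 : e * ‖x n - p‖ ≤ e * M := mul_le_mul_of_nonneg_left hMa' he0
        have e2 : e * ‖x n - T (x n)‖ ≤ e * M := mul_le_mul_of_nonneg_left hMd' he0
        have e3 : κ * (2 * e * ‖x n - T (x n)‖) ≤ 2 * e * ‖x n - T (x n)‖ := by
          have h0 : 0 ≤ 2 * e * ‖x n - T (x n)‖ := by positivity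
          nlinarith
        have e4 : (1 + κ) * e ^ 2 ≤ 2 * e := by nlinarith
        rw [hKdef]; nlinarith
      have hTp : ‖T (x n) - p‖ ^ 2
          ≤ ‖x n - p‖ ^ 2 + κ * ‖x n - T (x n)‖ ^ 2 + K * e := by
        have hκ2' : κ * ‖(x n - T (x n)) - (y - T y)‖ ^ 2
            ≤ κ * (‖x n - T (x n)‖ + e) ^ 2 := mul_le_mul_of_nonneg_left h2' hκ0
        have hexp1 : (‖x n - p‖ + e) ^ 2
            = ‖x n - p‖ ^ 2 + 2 * e * ‖x n - p‖ + e ^ 2 := by ring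
        have hexp2 : κ * (‖x n - T (x n)‖ + e) ^ 2
            = κ * ‖x n - T (x n)‖ ^ 2 + κ * (2 * e * ‖x n - T (x n)‖) + κ * e ^ 2 := by
          ring
        rw [hpdef]
        have hone : (1 + κ) * e ^ 2 = e ^ 2 + κ * e ^ 2 := by ring
        linarith
      -- combine
      have hfac : (1 - lam n) * ‖T (x n) - p‖ ^ 2
          ≤ (1 - lam n) * ‖x n - p‖ ^ 2 + (1 - lam n) * (κ * ‖x n - T (x n)‖ ^ 2)
            + (1 - lam n) * (K * e) := by
        have := mul_le_mul_of_nonneg_left hTp (show (0:ℝ) ≤ 1 - lam n by linarith)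
        linarith [this, (by ring :
          (1 - lam n) * (‖x n - p‖ ^ 2 + κ * ‖x n - T (x n)‖ ^ 2 + K * e)
          = (1 - lam n) * ‖x n - p‖ ^ 2 + (1 - lam n) * (κ * ‖x n - T (x n)‖ ^ 2)
            + (1 - lam n) * (K * e))]
      have hKe : (1 - lam n) * (K * e) ≤ K * e := by
        have h0 : 0 ≤ K * e := mul_nonneg (le_of_lt hK0) he0
        nlinarith
      have hring : lam n * ‖x n - p‖ ^ 2 + ((1 - lam n) * ‖x n - p‖ ^ 2
            + (1 - lam n) * (κ * ‖x n - T (x n)‖ ^ 2) + (1 - lam n) * (K * e))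
            - lam n * (1 - lam n) * ‖x n - T (x n)‖ ^ 2
          = ‖x n - p‖ ^ 2 - (lam n - κ) * (1 - lam n) * ‖x n - T (x n)‖ ^ 2
            + (1 - lam n) * (K * e) := by ring
      linarith [hid, hfac, hKe, hring]
    -- telescoping
    have sum_le : ∀ m, m ≤ N + 1 →
        (∑ n ∈ Finset.range m, (lam n - κ) * (1 - lam n) * ‖x n - T (x n)‖ ^ 2)
          + ‖x m - p‖ ^ 2 ≤ ‖x 0 - p‖ ^ 2 + (m : ℝ) * (K * e) := by
      intro m
      induction m with
      | zero => intro _; simp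
      | succ m ih =>
        intro hm
        have hmN : m ≤ N := Nat.lt_succ_iff.mp hm
        have ihm := ih (by omega)
        rw [Finset.sum_range_succ]
        have hst := step m hmN
        push_cast
        linarith
    have hfin := sum_le (N + 1) le_rfl
    have ha0 : ‖x 0 - p‖ ≤ b + e := by
      have h : x 0 - p = (x 0 - y) + (y - p) := by abel
      rw [h]
      refine le_trans (norm_add_le _ _) ?_
      have h' : ‖y - p‖ = e := by rw [hedef, hpdef]
      linarith
    have ha0' : ‖x 0 - p‖ ^ 2 ≤ (b + e) ^ 2 :=
      pow_le_pow_left₀ (norm_nonneg _) ha0 2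
    have ha0'' : (b + e) ^ 2 ≤ b ^ 2 + (2 * b + 1) * e := by nlinarith
    have hxN : (0:ℝ) ≤ ‖x (N + 1) - p‖ ^ 2 := by positivity
    push_cast at hfin
    have hr1 : ((N:ℝ) + 1) * (K * e) = ((N:ℝ) + 1) * K * e := by ring
    have hr2 : (2 * b + 1 + ((N:ℝ) + 1) * K) * e
        = (2 * b + 1) * e + ((N:ℝ) + 1) * K * e := by ring
    linarith
  -- pass to the limit δ → 0
  refine le_of_forall_pos_le_add ?_
  intro ε hε
  set C0 : ℝ := 2 * b + 1 + (N + 1 : ℝ) * K with hC0def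
  have hC0 : 0 < C0 := by
    rw [hC0def]
    have : (0:ℝ) < (N + 1 : ℝ) * K := by positivity
    linarith
  obtain ⟨y, hy, hyb, hyδ⟩ := hafp (min 1 (ε / C0)) (lt_min one_pos (div_pos hε hC0))
  have hy1 : ‖y - T y‖ ≤ 1 := le_of_lt (lt_of_lt_of_le hyδ (min_le_left _ _))
  have hkey := key y hy hyb hy1
  have h2 : C0 * ‖y - T y‖ ≤ ε := by
    have h3 : ‖y - T y‖ ≤ ε / C0 := le_of_lt (lt_of_lt_of_le hyδ (min_le_right _ _))
    calc C0 * ‖y - T y‖ ≤ C0 * (ε / C0) := mul_le_mul_of_nonneg_left h3 (le_of_lt hC0)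
      _ = ε := by field_simp

  linarith
end

section
/- (Krasnoselskii case) Let T be a κ-strict pseudo-contraction, λ ∈ (κ,1) constant, x ∈ C, b > 0 with ‖x - Tx‖ ≤ b, and suppose T has approximate fixed points in a b-neighborhood of x. Then for all ε > 0 and all n ≥ ⌈1/((λ-κ)(1-λ))⌉·⌈b²/ε²⌉, the Krasnoselskii iteration x_{n+1} = λxₙ + (1-λ)Txₙ satisfies ‖xₙ - Txₙ‖ < ε. -/
lemma combo_sq {H : Type*} [NormedAddCommGroup H] [InnerProductSpace ℝ H] (a b : H) (t : ℝ) :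
    ‖t • a + (1 - t) • b‖ ^ 2 = t * ‖a‖ ^ 2 + (1 - t) * ‖b‖ ^ 2 - t * (1 - t) * ‖a - b‖ ^ 2 := by
  simp only [← real_inner_self_eq_norm_sq, inner_add_left, inner_add_right, inner_sub_left,
    inner_sub_right, real_inner_smul_left, real_inner_smul_right, real_inner_comm b a]
  ring

set_option maxHeartbeats 2000000 in
theorem stmt_9 {H : Type*} [NormedAddCommGroup H] [InnerProductSpace ℝ H]
    (C : Set H) (hCne : C.Nonempty) (hCconv : Convex ℝ C)
    (κ : ℝ) (hκ0 : 0 ≤ κ) (hκ1 : κ < 1)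
    (T : H → H) (hTmap : Set.MapsTo T C C)
    (hT : ∀ u ∈ C, ∀ v ∈ C,
      ‖T u - T v‖ ^ 2 ≤ ‖u - v‖ ^ 2 + κ * ‖(u - T u) - (v - T v)‖ ^ 2)
    (lam : ℝ) (hlam : lam ∈ Set.Ioo κ 1)
    (x : ℕ → H) (hx0 : x 0 ∈ C)
    (hxrec : ∀ n, x (n + 1) = lam • x n + (1 - lam) • T (x n))
    (b : ℝ) (hb : 0 < b) (hxb : ‖x 0 - T (x 0)‖ ≤ b)
    (hafp : ∀ δ > (0:ℝ), ∃ y ∈ C, ‖x 0 - y‖ ≤ b ∧ ‖y - T y‖ < δ) :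
    ∀ ε > (0:ℝ), ∀ n : ℕ,
      ⌈1 / ((lam - κ) * (1 - lam))⌉₊ * ⌈b ^ 2 / ε ^ 2⌉₊ ≤ n →
      ‖x n - T (x n)‖ < ε := by
  obtain ⟨hκlam, hlam1⟩ := hlam
  obtain ⟨c, hcdef⟩ : ∃ c : ℝ, c = (lam - κ) * (1 - lam) := ⟨_, rfl⟩
  have hc : 0 < c := by rw [hcdef]; exact mul_pos (by linarith) (by linarith)
  have hlam0 : 0 < lam := lt_of_le_of_lt hκ0 hκlam
  obtain ⟨S, hSapp⟩ : ∃ S : H → H, ∀ v, S v = lam • v + (1 - lam) • T v :=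
    ⟨_, fun v => rfl⟩
  -- iterates stay in C
  have hxC : ∀ k, x k ∈ C := by
    intro k
    induction k with
    | zero => exact hx0
    | succ k ih =>
      rw [hxrec]
      exact hCconv ih (hTmap ih) hlam0.le (by linarith) (by ring)
  have hsub : ∀ v, v - S v = (1 - lam) • (v - T v) := by
    intro v
    rw [hSapp]
    module
  -- key contraction estimate
  have key : ∀ u ∈ C, ∀ v ∈ C,
      ‖S u - S v‖ ^ 2 ≤ ‖u - v‖ ^ 2 - c * ‖(u - T u) - (v - T v)‖ ^ 2 := by
    intro u hu v hv
    have hid : S u - S v = lam • (u - v) + (1 - lam) • (T u - T v) := by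
      rw [hSapp, hSapp]
      module
    have hd : (u - v) - (T u - T v) = (u - T u) - (v - T v) := by abel
    have e1 : ‖S u - S v‖ ^ 2 = lam * ‖u - v‖ ^ 2 + (1 - lam) * ‖T u - T v‖ ^ 2
        - lam * (1 - lam) * ‖(u - T u) - (v - T v)‖ ^ 2 := by
      rw [hid, combo_sq, hd]
    have hB := hT u hu v hv
    have h1 : (0:ℝ) ≤ 1 - lam := by linarith
    rw [hcdef]
    linarith [e1, mul_le_mul_of_nonneg_left hB h1]
  have hne : ∀ u ∈ C, ∀ v ∈ C, ‖S u - S v‖ ≤ ‖u - v‖ := by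
    intro u hu v hv
    have h := key u hu v hv
    have h2 : ‖S u - S v‖^2 ≤ ‖u - v‖^2 := by
      linarith [h, mul_nonneg hc.le (pow_nonneg (norm_nonneg ((u - T u) - (v - T v))) 2)]
    exact (pow_le_pow_iff_left₀ (norm_nonneg _) (norm_nonneg _) two_ne_zero).1 h2
  -- residual is nonincreasing
  have hmono : ∀ k, ‖x (k+1) - T (x (k+1))‖ ≤ ‖x k - T (x k)‖ := by
    intro k
    have e1 : x (k+1) = S (x k) := by rw [hxrec, hSapp]
    have h4 : ‖S (x k) - S (x (k+1))‖ ≤ ‖x k - x (k+1)‖ := hne _ (hxC k) _ (hxC (k+1))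
    rw [show x k - x (k+1) = x k - S (x k) by rw [e1]] at h4
    rw [show S (x k) - S (x (k+1)) = x (k+1) - S (x (k+1)) by rw [e1]] at h4
    rw [hsub, hsub, norm_smul, norm_smul, Real.norm_eq_abs,
      abs_of_nonneg (by linarith : (0:ℝ) ≤ 1 - lam)] at h4
    have h1 : 0 < 1 - lam := by linarith
    exact le_of_mul_le_mul_left h4 h1
  have hrdec : ∀ i j : ℕ, i ≤ j → ‖x j - T (x j)‖ ≤ ‖x i - T (x i)‖ := by
    intro i j h
    induction h with
    | refl => exact le_rfl
    | step h ih => exact (hmono _).trans ih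
  intro ε hε n hn
  by_contra hcontra
  push_neg at hcontra
  have hrk : ∀ k, k ≤ n → ε ≤ ‖x k - T (x k)‖ := fun k hk =>
    le_trans hcontra (hrdec k n hk)
  -- arithmetic setup
  obtain ⟨q, hqdef⟩ : ∃ q : ℝ, q = Real.sqrt κ := ⟨_, rfl⟩
  have hq0 : 0 ≤ q := hqdef ▸ Real.sqrt_nonneg κ
  have hq2 : q ^ 2 = κ := hqdef ▸ Real.sq_sqrt hκ0
  have hq1 : q < 1 := by
    rw [hqdef]
    exact lt_of_lt_of_eq (Real.sqrt_lt_sqrt hκ0 hκ1) Real.sqrt_one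
  obtain ⟨s, hsdef⟩ : ∃ s : ℝ, s = (1 - q) * ε / 2 := ⟨_, rfl⟩
  have hs : 0 < s := by
    rw [hsdef]
    have : 0 < 1 - q := by linarith
    positivity
  obtain ⟨M, hMdef⟩ : ∃ M : ℝ, M = 2*n*c*ε + 2*n*b + 2*(n:ℝ)^2 + n + 1 := ⟨_, rfl⟩
  have hM : 0 < M := by
    rw [hMdef]
    have h1 : (0:ℝ) ≤ (n:ℝ) := Nat.cast_nonneg n
    have h2 : (0:ℝ) ≤ 2*n*c*ε := by positivity
    have h3 : (0:ℝ) ≤ 2*n*b := by positivity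
    have h4 : (0:ℝ) ≤ 2*(n:ℝ)^2 := by positivity
    linarith
  obtain ⟨δ, hδdef⟩ : ∃ δ : ℝ, δ = min (min 1 ε) (min (s/2) (s^2/(8*M))) := ⟨_, rfl⟩
  have hδ0 : 0 < δ := by
    rw [hδdef]
    exact lt_min (lt_min one_pos hε) (lt_min (by positivity) (by positivity))
  have hδ1 : δ ≤ 1 := by
    rw [hδdef]; exact le_trans (min_le_left _ _) (min_le_left _ _)
  have hδε : δ ≤ ε := by
    rw [hδdef]; exact le_trans (min_le_left _ _) (min_le_right _ _)
  have hδs : δ ≤ s/2 := by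
    rw [hδdef]; exact le_trans (min_le_right _ _) (min_le_left _ _)
  have hδM : δ ≤ s^2/(8*M) := by
    rw [hδdef]; exact le_trans (min_le_right _ _) (min_le_right _ _)
  obtain ⟨y, hyC, hyb, hyδ⟩ := hafp δ hδ0
  -- ‖S y - y‖ ≤ δ
  have hSy : ‖S y - y‖ ≤ δ := by
    have h0 : S y - y = -((1 - lam) • (y - T y)) := by rw [← hsub]; abel
    rw [h0, norm_neg, norm_smul, Real.norm_eq_abs,
      abs_of_nonneg (by linarith : (0:ℝ) ≤ 1 - lam)]
    have := mul_le_mul_of_nonneg_right (by linarith : 1 - lam ≤ 1) (norm_nonneg (y - T y))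
    linarith [hyδ.le]
  -- distance growth bound
  have habd : ∀ k : ℕ, ‖x k - y‖ ≤ b + k * δ := by
    intro k
    induction k with
    | zero => simpa using hyb
    | succ k ih =>
      have e1 : x (k+1) = S (x k) := by rw [hxrec, hSapp]
      have t1 : ‖x (k+1) - y‖ ≤ ‖S (x k) - S y‖ + ‖S y - y‖ := by
        rw [e1]
        have h0 : S (x k) - y = (S (x k) - S y) + (S y - y) := by abel
        rw [h0]; exact norm_add_le _ _
      have t2 : ‖S (x k) - S y‖ ≤ ‖x k - y‖ := hne _ (hxC k) _ hyC
      push_cast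
      linarith
  -- main descent estimate
  obtain ⟨E, hEdef⟩ : ∃ E : ℝ, E = δ + 2*(b + n*δ) := ⟨_, rfl⟩
  have main : ∀ k : ℕ, k ≤ n → ‖x k - y‖^2 ≤ b^2 + k*(δ*E) - k*(c*(ε-δ)^2) := by
    intro k hk
    induction k with
    | zero =>
      simp only [Nat.cast_zero, zero_mul, add_zero, sub_zero]
      exact pow_le_pow_left₀ (norm_nonneg _) hyb 2
    | succ k ih =>
      have hkn : k ≤ n := le_of_lt (Nat.lt_of_succ_le hk)
      have ihk := ih hkn
      have e1 : x (k+1) = S (x k) := by rw [hxrec, hSapp]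
      have hkey := key (x k) (hxC k) y hyC
      have hdlb : ε - δ ≤ ‖(x k - T (x k)) - (y - T y)‖ := by
        have h0 := norm_sub_norm_le (x k - T (x k)) (y - T y)
        have hr := hrk k hkn
        linarith [hyδ.le]
      have hd2 : c*(ε-δ)^2 ≤ c*‖(x k - T (x k)) - (y - T y)‖^2 := by
        apply mul_le_mul_of_nonneg_left _ hc.le
        exact pow_le_pow_left₀ (by linarith) hdlb 2
      have htri : ‖x (k+1) - y‖ ≤ ‖S (x k) - S y‖ + δ := by
        rw [e1]
        have h0 : S (x k) - y = (S (x k) - S y) + (S y - y) := by abel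
        rw [h0]
        exact le_trans (norm_add_le _ _) (by linarith)
      have hSb : ‖S (x k) - S y‖ ≤ b + n*δ := by
        have t2 : ‖S (x k) - S y‖ ≤ ‖x k - y‖ := hne _ (hxC k) _ hyC
        have t3 := habd k
        have t4 : (k:ℝ) ≤ (n:ℝ) := Nat.cast_le.2 hkn
        have t5 : (k:ℝ)*δ ≤ (n:ℝ)*δ := mul_le_mul_of_nonneg_right t4 hδ0.le
        linarith
      have hsq : ‖x (k+1) - y‖^2 ≤ (‖S (x k) - S y‖ + δ)^2 :=
        pow_le_pow_left₀ (norm_nonneg _) htri 2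
      have hcast : ((k+1:ℕ):ℝ) = (k:ℝ) + 1 := by push_cast; ring
      rw [hcast]
      have u1 : 2*δ*‖S (x k) - S y‖ ≤ 2*δ*(b + n*δ) := by
        have := mul_le_mul_of_nonneg_left hSb (by positivity : (0:ℝ) ≤ 2*δ)
        linarith
      have hEe : δ*E = δ^2 + 2*δ*(b + n*δ) := by rw [hEdef]; ring
      have u2 : ‖x (k+1) - y‖^2 ≤ ‖S (x k) - S y‖^2 + 2*δ*‖S (x k) - S y‖ + δ^2 :=
        le_of_le_of_eq hsq (by ring)
      linarith [hkey, hd2, ihk, u1, u2, hEe]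
  -- lower bound on ‖x n - y‖
  have hlow : s - δ ≤ ‖x n - y‖ := by
    have hLip : ‖T y - T (x n)‖ ≤ ‖y - x n‖ + q * ‖(y - T y) - (x n - T (x n))‖ := by
      have h := hT y hyC (x n) (hxC n)
      rw [← hq2] at h
      have h2 : ‖T y - T (x n)‖^2 ≤ (‖y - x n‖ + q * ‖(y - T y) - (x n - T (x n))‖)^2 := by
        have hexp : (‖y - x n‖ + q * ‖(y - T y) - (x n - T (x n))‖)^2
            = ‖y - x n‖^2 + q^2 * ‖(y - T y) - (x n - T (x n))‖^2
              + 2 * (q * ‖y - x n‖ * ‖(y - T y) - (x n - T (x n))‖) := by ring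
        have hpos := mul_nonneg (mul_nonneg hq0 (norm_nonneg (y - x n)))
          (norm_nonneg ((y - T y) - (x n - T (x n))))
        linarith [h]
      exact (pow_le_pow_iff_left₀ (norm_nonneg _)
        (by positivity) two_ne_zero).1 h2
    have htri1 : ‖x n - T (x n)‖ ≤ ‖x n - y‖ + ‖y - T y‖ + ‖T y - T (x n)‖ := by
      have h0 : x n - T (x n) = (x n - y) + (y - T y) + (T y - T (x n)) := by abel
      rw [h0]
      exact le_trans (norm_add_le _ _) (by linarith [norm_add_le (x n - y) (y - T y)])
    have htri2 : ‖(y - T y) - (x n - T (x n))‖ ≤ ‖y - T y‖ + ‖x n - T (x n)‖ :=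
      norm_sub_le _ _
    have hrev : ‖y - x n‖ = ‖x n - y‖ := norm_sub_rev _ _
    have hrn := hcontra
    have h1q : (0:ℝ) ≤ 1 - q := by linarith
    have m1 := mul_le_mul_of_nonneg_left hrn h1q
    have m2 := mul_le_mul_of_nonneg_left hyδ.le hq0
    have m3 := mul_le_mul_of_nonneg_left htri2 hq0
    have m4 : q*δ ≤ 1*δ := mul_le_mul_of_nonneg_right hq1.le hδ0.le
    rw [hsdef]
    linarith [m1, m2, m3, m4, hLip, htri1, hyδ.le]
  -- b^2 ≤ n * c * ε^2
  have hcount : b^2 ≤ (n:ℝ) * (c * ε^2) := by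
    have c1 : 1/c ≤ (⌈1/c⌉₊:ℝ) := Nat.le_ceil _
    have c2 : b^2/ε^2 ≤ (⌈b^2/ε^2⌉₊:ℝ) := Nat.le_ceil _
    rw [hcdef] at c1
    have c3 : ((⌈1/((lam - κ) * (1 - lam))⌉₊ * ⌈b^2/ε^2⌉₊ : ℕ):ℝ) ≤ (n:ℝ) :=
      Nat.cast_le.2 hn
    push_cast at c3
    have c4 : (1/((lam - κ) * (1 - lam))) * (b^2/ε^2) ≤ (n:ℝ) :=
      le_trans (mul_le_mul c1 c2 (by positivity) (Nat.cast_nonneg _)) c3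
    rw [← hcdef] at c4
    rw [div_mul_div_comm, one_mul, div_le_iff₀ (by positivity)] at c4
    linarith
  -- final contradiction
  have hmain := main n le_rfl
  have hδMM : δ * M ≤ s^2/8 := by
    calc δ * M ≤ (s^2/(8*M)) * M := mul_le_mul_of_nonneg_right hδM hM.le
    _ = s^2/8 := by field_simp
  have hnδ : (0:ℝ) ≤ (n:ℝ) * δ := by positivity
  have han : s/2 ≤ ‖x n - y‖ := by linarith
  have han2 : (s/2)^2 ≤ ‖x n - y‖^2 := pow_le_pow_left₀ (by positivity) han 2
  have hE1 : (n:ℝ)*(δ*E) ≤ (n:ℝ)*δ*(2*b + 2*n + 1) := by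
    have hEb : E ≤ 2*b + 2*n + 1 := by
      have t1 : (n:ℝ)*δ ≤ (n:ℝ)*1 := mul_le_mul_of_nonneg_left hδ1 (Nat.cast_nonneg _)
      rw [hEdef]
      linarith
    have := mul_le_mul_of_nonneg_left hEb hnδ
    linarith [mul_assoc (n:ℝ) δ E]
  have hC1 : (n:ℝ)*(c*(ε-δ)^2) ≥ (n:ℝ)*c*ε^2 - 2*((n:ℝ)*c*ε)*δ := by
    have h2 : 0 ≤ (n:ℝ)*c*δ^2 := by positivity
    have e : (n:ℝ)*(c*(ε-δ)^2) = (n:ℝ)*c*ε^2 - 2*((n:ℝ)*c*ε)*δ + (n:ℝ)*c*δ^2 := by ring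
    linarith
  have hfin : ‖x n - y‖^2 ≤ δ * M := by
    have t1 : (n:ℝ)*δ*(2*b + 2*n + 1) ≤ δ*(2*n*b + 2*(n:ℝ)^2 + n) := le_of_eq (by ring)
    have t2 : 2*((n:ℝ)*c*ε)*δ = δ*(2*n*c*ε) := by ring
    rw [hMdef]
    linarith [hmain, hE1, hC1, hcount, hδ0.le]
  linarith [mul_pos hs hs, han2, hfin, hδMM]
end
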